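/- Clairaut identity a.e. step: with g as above (mixed Lions derivatives exist, bounded, Lipschitz), for each x ∈ ℝ and ξ ∈ L²(F;ℝ), computing the double increment I = g(x+z, P_{ξ+η}) − g(x+z, P_ξ) − g(x, P_{ξ+η}) + g(x, P_ξ) in two ways yields E[∂_x(∂_μ g)(x, P_ξ, ξ) η]·z = E[∂_μ(∂_x g)(x, P_ξ)(ξ) η]·z + R with |R| ≤ 4C|z|²E[η²], for all z ∈ ℝ, η ∈ L²(F;ℝ), where C is the common Lipschitz constant of the mixed derivatives; consequently ∂_x(∂_μ g)(x, P_ξ, y) = ∂_μ(∂_x g)(x, P_ξ)(y) for P_ξ-a.e. y. -/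

import Mathlib

open MeasureTheory ProbabilityTheory

noncomputable section

/-- The 2-Wasserstein distance between two probability measures on `ℝ`. -/
def W2 (μ ν : Measure ℝ) : ℝ :=
  sInf { c : ℝ | ∃ ρ : Measure (ℝ × ℝ), IsProbabilityMeasure ρ ∧
    ρ.map Prod.fst = μ ∧ ρ.map Prod.snd = ν ∧
    c = (∫ p, (p.1 - p.2) ^ 2 ∂ρ) ^ (1 / 2 : ℝ) }

variable {Ω : Type*} [MeasurableSpace Ω]

/-- `Df` is the Lions derivative of `f : P₂(ℝ) → ℝ`: for every `ϑ ∈ L²`, the lifted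
map `θ ↦ f(P_θ)` on `L²(Ω;ℝ)` is Fréchet differentiable at `ϑ`, with derivative
`η ↦ E[Df(P_ϑ, ϑ)·η]`. -/
def LionsDeriv1 (P : Measure Ω) (f : Measure ℝ → ℝ) (Df : Measure ℝ → ℝ → ℝ) : Prop :=
  ∀ ϑ : Ω → ℝ, Measurable ϑ → MemLp ϑ 2 P →
    ∀ ε > (0 : ℝ), ∃ δ > (0 : ℝ), ∀ η : Ω → ℝ, Measurable η → MemLp η 2 P →
      (∫ ω, (η ω) ^ 2 ∂P) ^ (1 / 2 : ℝ) ≤ δ →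
      |f (P.map (fun ω => ϑ ω + η ω)) - f (P.map ϑ)
          - ∫ ω, Df (P.map ϑ) (ϑ ω) * η ω ∂P|
        ≤ ε * (∫ ω, (η ω) ^ 2 ∂P) ^ (1 / 2 : ℝ)

/-! If `ϑ` takes the value `y` on an event `E` of probability `p > 0`, the lift of `μ ↦ g(x, μ)`
differentiates along the direction `1_E` to `p · ∂_μ g(x, P_ϑ)(y)`. Hence
`(s, τ) ↦ g(x + s, P_{ϑ + τ 1_E})` is a function of two real variables whose mixed partials are
`p · ∂_x ∂_μ g` and `p · ∂_μ ∂_x g` at `(x + s, P_{ϑ + τ 1_E}, y + τ)`. Expanding its double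
increment over `[0, t]²` in both orders and using the Lipschitz bounds shows that the two mixed
derivatives differ by at most `6 C t`, so they agree at every atom `y` of the law.
A point `y` of the support of `P_ξ` becomes such an atom once `ξ⁻¹ (closedBall y ε)` is collapsed
onto `y`, which moves the law by at most `ε` in `W₂`; letting `ε → 0` gives equality on the
support, which is `P_ξ`-conull, and the identity then holds with `R = 0`. -/

open Set Filter Topology

lemma W2_nonneg (μ ν : Measure ℝ) : 0 ≤ W2 μ ν :=
  Real.sInf_nonneg <| by
    rintro c ⟨ρ, -, -, -, rfl⟩
    exact Real.rpow_nonneg (integral_nonneg fun _ => sq_nonneg _) _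

lemma W2_map_le_of_abs_sub_le (P : Measure Ω) [IsProbabilityMeasure P] {f₁ f₂ : Ω → ℝ}
    (h₁ : Measurable f₁) (h₂ : Measurable f₂) {c : ℝ} (hc : 0 ≤ c)
    (hf : ∀ ω, |f₁ ω - f₂ ω| ≤ c) :
    W2 (P.map f₁) (P.map f₂) ≤ c := by
  have hpair : Measurable fun ω => (f₁ ω, f₂ ω) := h₁.prodMk h₂
  have hcost : ∫ q, (q.1 - q.2) ^ 2 ∂(P.map fun ω => (f₁ ω, f₂ ω)) ≤ c ^ 2 := by
    rw [integral_map hpair.aemeasurable (by fun_prop)]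
    calc ∫ ω, (f₁ ω - f₂ ω) ^ 2 ∂P ≤ ∫ _, c ^ 2 ∂P :=
          integral_mono_of_nonneg (ae_of_all _ fun _ => sq_nonneg _) (integrable_const _)
            (ae_of_all _ fun ω => sq_le_sq' (abs_le.1 (hf ω)).1 (abs_le.1 (hf ω)).2)
      _ = c ^ 2 := by simp
  refine csInf_le_of_le ⟨0, ?_⟩ ⟨P.map fun ω => (f₁ ω, f₂ ω),
    Measure.isProbabilityMeasure_map hpair.aemeasurable, ?_, ?_, rfl⟩ ?_
  · rintro _ ⟨ρ, -, -, -, rfl⟩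
    exact Real.rpow_nonneg (integral_nonneg fun _ => sq_nonneg _) _
  · rw [Measure.map_map measurable_fst hpair]; rfl
  · rw [Measure.map_map measurable_snd hpair]; rfl
  · rw [← Real.sqrt_eq_rpow]
    exact Real.sqrt_le_iff.2 ⟨hc, hcost⟩

lemma abs_sub_sub_mul_le_of_hasDerivAt {f f' : ℝ → ℝ} {K M t : ℝ} (ht : 0 ≤ t)
    (hf : ∀ τ ∈ Icc 0 t, HasDerivAt f (f' τ) τ) (hM : ∀ τ ∈ Icc 0 t, |f' τ - K| ≤ M) :
    |f t - f 0 - t * K| ≤ M * t := by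
  have hφ : ∀ τ ∈ Icc 0 t, HasDerivWithinAt (fun σ => f σ - σ * K) (f' τ - K) (Icc 0 t) τ :=
    fun τ hτ => ((hf τ hτ).sub (hasDerivAt_mul_const K)).hasDerivWithinAt
  have := norm_image_sub_le_of_norm_deriv_le_segment' hφ
    (fun τ hτ => hM τ (Ico_subset_Icc_self hτ)) t (right_mem_Icc.2 ht)
  rw [Real.norm_eq_abs, sub_zero] at this
  convert this using 2
  ring

theorem abs_sub_le_of_hasDerivAt_mixed {h a b a' b' : ℝ → ℝ → ℝ} {K₁ K₂ M t : ℝ} (ht : 0 < t)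
    (ha : ∀ s τ, HasDerivAt (fun s => h s τ) (a s τ) s)
    (hb : ∀ s τ, HasDerivAt (fun τ => h s τ) (b s τ) τ)
    (ha' : ∀ s τ, HasDerivAt (fun τ => a s τ) (a' s τ) τ)
    (hb' : ∀ s τ, HasDerivAt (fun s => b s τ) (b' s τ) s)
    (hK₁ : ∀ s ∈ Icc 0 t, ∀ τ ∈ Icc 0 t, |a' s τ - K₁| ≤ M)
    (hK₂ : ∀ s ∈ Icc 0 t, ∀ τ ∈ Icc 0 t, |b' s τ - K₂| ≤ M) :
    |K₁ - K₂| ≤ 2 * M := by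
  have hA : |h t t - h t 0 - (h 0 t - h 0 0) - t * (t * K₁)| ≤ M * t * t :=
    abs_sub_sub_mul_le_of_hasDerivAt ht.le (fun s _ => (ha s t).sub (ha s 0)) fun s hs =>
      abs_sub_sub_mul_le_of_hasDerivAt ht.le (fun τ _ => ha' s τ) (hK₁ s hs)
  have hB : |h t t - h 0 t - (h t 0 - h 0 0) - t * (t * K₂)| ≤ M * t * t :=
    abs_sub_sub_mul_le_of_hasDerivAt ht.le (fun τ _ => (hb t τ).sub (hb 0 τ)) fun τ hτ =>
      abs_sub_sub_mul_le_of_hasDerivAt ht.le (fun s _ => hb' s τ) (hK₂ · · τ hτ)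
  have : t ^ 2 * |K₁ - K₂| ≤ t ^ 2 * (2 * M) := by
    rw [← abs_of_pos (pow_pos ht 2), ← abs_mul, abs_of_pos (pow_pos ht 2)]
    calc |t ^ 2 * (K₁ - K₂)|
        = |(h t t - h 0 t - (h t 0 - h 0 0) - t * (t * K₂))
            - (h t t - h t 0 - (h 0 t - h 0 0) - t * (t * K₁))| := by congr 1; ring
      _ ≤ M * t * t + M * t * t := (abs_sub _ _).trans (add_le_add hB hA)
      _ = t ^ 2 * (2 * M) := by ring
  exact le_of_mul_le_mul_left this (pow_pos ht 2)

lemma eq_of_forall_pos_abs_sub_le_mul {a b C : ℝ} (h : ∀ ε > 0, |a - b| ≤ C * ε) : a = b := by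
  have hlim : Tendsto (fun ε => C * ε) (𝓝[>] 0) (𝓝 0) := by
    simpa using ((continuous_const_mul C).tendsto 0).mono_left nhdsWithin_le_nhds
  exact sub_eq_zero.1 (abs_nonpos_iff.1 (ge_of_tendsto hlim (eventually_nhdsWithin_of_forall h)))

lemma integral_sq_const_mul_rpow_half (P : Measure Ω) (c : ℝ) (η : Ω → ℝ) :
    (∫ ω, (c * η ω) ^ 2 ∂P) ^ (1 / 2 : ℝ) = |c| * (∫ ω, η ω ^ 2 ∂P) ^ (1 / 2 : ℝ) := by
  simp_rw [← Real.sqrt_eq_rpow, mul_pow, integral_const_mul, Real.sqrt_mul (sq_nonneg c),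
    Real.sqrt_sq_eq_abs]

theorem LionsDeriv1.hasDerivAt_map_add_mul {P : Measure Ω} {f : Measure ℝ → ℝ}
    {Df : Measure ℝ → ℝ → ℝ} (hf : LionsDeriv1 P f Df) {ϑ η : Ω → ℝ} (hϑm : Measurable ϑ)
    (hϑ : MemLp ϑ 2 P) (hηm : Measurable η) (hη : MemLp η 2 P) (τ₀ : ℝ) :
    HasDerivAt (fun τ => f (P.map fun ω => ϑ ω + τ * η ω))
      (∫ ω, Df (P.map fun ω => ϑ ω + τ₀ * η ω) (ϑ ω + τ₀ * η ω) * η ω ∂P) τ₀ := by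
  set ϑ₀ : Ω → ℝ := fun ω => ϑ ω + τ₀ * η ω
  set N := (∫ ω, η ω ^ 2 ∂P) ^ (1 / 2 : ℝ)
  have hN : 0 ≤ N := Real.rpow_nonneg (integral_nonneg fun _ => sq_nonneg _) _
  rw [hasDerivAt_iff_isLittleO, Asymptotics.isLittleO_iff]
  intro c hc
  obtain ⟨δ, hδ, H⟩ := hf ϑ₀ (hϑm.add (hηm.const_mul τ₀)) (hϑ.add (hη.const_mul τ₀))
    (c / (N + 1)) (by positivity)
  filter_upwards [Metric.ball_mem_nhds τ₀ (by positivity : 0 < δ / (N + 1))] with τ hτ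
  rw [Metric.mem_ball, Real.dist_eq] at hτ
  have hsmall : |τ - τ₀| * N ≤ δ := by
    calc |τ - τ₀| * N ≤ δ / (N + 1) * (N + 1) := by gcongr; linarith
      _ = δ := div_mul_cancel₀ δ (by positivity)
  have key := H (fun ω => (τ - τ₀) * η ω) (hηm.const_mul _) (hη.const_mul _)
    (by rwa [integral_sq_const_mul_rpow_half])
  have harg : (fun ω => ϑ₀ ω + (τ - τ₀) * η ω) = fun ω => ϑ ω + τ * η ω := by
    funext ω; simp only [ϑ₀]; ring
  simp_rw [harg, integral_sq_const_mul_rpow_half, mul_left_comm _ (τ - τ₀),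
    integral_const_mul] at key
  rw [Real.norm_eq_abs, Real.norm_eq_abs, smul_eq_mul]
  calc _ ≤ c / (N + 1) * (|τ - τ₀| * N) := key
    _ ≤ c / (N + 1) * (|τ - τ₀| * (N + 1)) := by gcongr; linarith
    _ = c * |τ - τ₀| := by field_simp

theorem LionsDeriv1.hasDerivAt_map_add_mul_indicator {P : Measure Ω} [IsFiniteMeasure P]
    {f : Measure ℝ → ℝ} {Df : Measure ℝ → ℝ → ℝ} (hf : LionsDeriv1 P f Df) {ϑ : Ω → ℝ}
    (hϑm : Measurable ϑ) (hϑ : MemLp ϑ 2 P) {E : Set Ω} (hE : MeasurableSet E) {y : ℝ}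
    (hϑE : ∀ ω ∈ E, ϑ ω = y) (τ : ℝ) :
    HasDerivAt (fun σ => f (P.map fun ω => ϑ ω + σ * E.indicator 1 ω))
      (P.real E * Df (P.map fun ω => ϑ ω + τ * E.indicator 1 ω) (y + τ)) τ := by
  have hint : ∀ F : ℝ → ℝ, ∫ ω, F (ϑ ω + τ * E.indicator 1 ω) * E.indicator 1 ω ∂P
      = P.real E * F (y + τ) := fun F => by
    rw [← smul_eq_mul, ← integral_indicator_const _ hE]
    congr 1 with ω
    by_cases hω : ω ∈ E <;> simp [hω, hϑE]
  simpa only [hint] using hf.hasDerivAt_map_add_mul hϑm hϑ (measurable_one.indicator hE)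
    ((memLp_const 1).indicator hE) τ

theorem mixed_derivs_eq_of_atom (P : Measure Ω) [IsProbabilityMeasure P]
    {g : ℝ → Measure ℝ → ℝ} {Dxg : ℝ → Measure ℝ → ℝ} {Dμg DxDμg DμDxg : ℝ → Measure ℝ → ℝ → ℝ}
    {C : ℝ} (hDxg : ∀ x μ, HasDerivAt (fun x' => g x' μ) (Dxg x μ) x)
    (hDμg : ∀ x, LionsDeriv1 P (g x) (Dμg x))
    (hDxDμ : ∀ μ y x, HasDerivAt (fun x' => Dμg x' μ y) (DxDμg x μ y) x)
    (hDμDx : ∀ x, LionsDeriv1 P (fun μ => Dxg x μ) (fun μ y => DμDxg x μ y)) (hC : 0 ≤ C)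
    (hlip : ∀ x x' μ μ' y y',
      |DxDμg x μ y - DxDμg x' μ' y'| ≤ C * (|x - x'| + |y - y'| + W2 μ μ') ∧
      |DμDxg x μ y - DμDxg x' μ' y'| ≤ C * (|x - x'| + |y - y'| + W2 μ μ'))
    {ϑ : Ω → ℝ} (hϑm : Measurable ϑ) (hϑ : MemLp ϑ 2 P) (x : ℝ) {y : ℝ}
    (hy : P.map ϑ {y} ≠ 0) :
    DxDμg x (P.map ϑ) y = DμDxg x (P.map ϑ) y := by
  set E := ϑ ⁻¹' {y}
  have hE : MeasurableSet E := hϑm (measurableSet_singleton y)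
  have hϑE : ∀ ω ∈ E, ϑ ω = y := fun _ h => h
  have hp : 0 < P.real E := by
    rw [Measure.map_apply hϑm (measurableSet_singleton y)] at hy
    exact ENNReal.toReal_pos hy (measure_ne_top P E)
  set L : ℝ → Measure ℝ := fun τ => P.map fun ω => ϑ ω + τ * E.indicator 1 ω
  have hL0 : P.map ϑ = L 0 := by simp [L]
  have hW2 : ∀ τ, 0 ≤ τ → W2 (L τ) (L 0) ≤ τ := fun τ hτ =>
    W2_map_le_of_abs_sub_le P (hϑm.add ((measurable_one.indicator hE).const_mul _))
      (hϑm.add ((measurable_one.indicator hE).const_mul _)) hτ fun ω => by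
        by_cases hω : ω ∈ E <;> simp [hω, abs_of_nonneg hτ, hτ]
  have hnear : ∀ D : ℝ → Measure ℝ → ℝ → ℝ,
      (∀ x' μ y', |D x' μ y' - D x (L 0) y| ≤ C * (|x' - x| + |y' - y| + W2 μ (L 0))) →
      ∀ t > 0, ∀ s ∈ Icc 0 t, ∀ τ ∈ Icc 0 t,
        |P.real E * D (x + s) (L τ) (y + τ) - P.real E * D x (L 0) y| ≤ P.real E * (3 * C * t) := by
    intro D hD t _ s hs τ hτ
    rw [← mul_sub, abs_mul, abs_of_pos hp]
    gcongr
    calc _ ≤ C * (|x + s - x| + |y + τ - y| + W2 (L τ) (L 0)) := hD _ _ _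
      _ ≤ C * (t + t + t) := by
          gcongr
          · rw [add_sub_cancel_left, abs_of_nonneg hs.1]; exact hs.2
          · rw [add_sub_cancel_left, abs_of_nonneg hτ.1]; exact hτ.2
          · exact (hW2 τ hτ.1).trans hτ.2
      _ = 3 * C * t := by ring
  refine eq_of_forall_pos_abs_sub_le_mul (C := 6 * C) fun t ht => ?_
  have hmixed := abs_sub_le_of_hasDerivAt_mixed ht
    (fun s τ => (hDxg (x + s) (L τ)).comp_const_add x s)
    (fun s τ => (hDμg (x + s)).hasDerivAt_map_add_mul_indicator hϑm hϑ hE hϑE τ)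
    (fun s τ => (hDμDx (x + s)).hasDerivAt_map_add_mul_indicator hϑm hϑ hE hϑE τ)
    (fun s τ => ((hDxDμ (L τ) (y + τ) (x + s)).comp_const_add x s).const_mul (P.real E))
    (hnear DμDxg (fun _ _ _ => (hlip _ _ _ _ _ _).2) t ht)
    (hnear DxDμg (fun _ _ _ => (hlip _ _ _ _ _ _).1) t ht)
  rw [← mul_sub, abs_mul, abs_of_pos hp, abs_sub_comm] at hmixed
  rw [hL0]
  nlinarith

theorem mixed_derivs_eq_of_mem_support (P : Measure Ω) [IsProbabilityMeasure P]
    {g : ℝ → Measure ℝ → ℝ} {Dxg : ℝ → Measure ℝ → ℝ} {Dμg DxDμg DμDxg : ℝ → Measure ℝ → ℝ → ℝ}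
    {C : ℝ} (hDxg : ∀ x μ, HasDerivAt (fun x' => g x' μ) (Dxg x μ) x)
    (hDμg : ∀ x, LionsDeriv1 P (g x) (Dμg x))
    (hDxDμ : ∀ μ y x, HasDerivAt (fun x' => Dμg x' μ y) (DxDμg x μ y) x)
    (hDμDx : ∀ x, LionsDeriv1 P (fun μ => Dxg x μ) (fun μ y => DμDxg x μ y)) (hC : 0 ≤ C)
    (hlip : ∀ x x' μ μ' y y',
      |DxDμg x μ y - DxDμg x' μ' y'| ≤ C * (|x - x'| + |y - y'| + W2 μ μ') ∧
      |DμDxg x μ y - DμDxg x' μ' y'| ≤ C * (|x - x'| + |y - y'| + W2 μ μ'))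
    {ξ : Ω → ℝ} (hξm : Measurable ξ) (hξ : MemLp ξ 2 P) (x : ℝ) {y : ℝ}
    (hy : y ∈ (P.map ξ).support) :
    DxDμg x (P.map ξ) y = DμDxg x (P.map ξ) y := by
  refine eq_of_forall_pos_abs_sub_le_mul (C := 2 * C) fun ε hε => ?_
  set E := ξ ⁻¹' Metric.closedBall y ε
  have hE : MeasurableSet E := hξm Metric.isClosed_closedBall.measurableSet
  have hPE : 0 < P E := by
    rw [← Measure.map_apply hξm Metric.isClosed_closedBall.measurableSet]
    exact (Measure.mem_support_iff_forall y).1 hy _ (Metric.closedBall_mem_nhds y hε)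
  set ϑ : Ω → ℝ := fun ω => ξ ω + E.indicator (fun ω => y - ξ ω) ω
  have hϑm : Measurable ϑ := hξm.add ((measurable_const.sub hξm).indicator hE)
  have hξϑ : ∀ ω, |ξ ω - ϑ ω| ≤ ε := fun ω => by
    by_cases hω : ω ∈ E
    · rw [show ϑ ω = y by simp [ϑ, hω]]
      simpa [E, Real.dist_eq] using hω
    · simp [ϑ, hω, hε.le]
  have hϑ : MemLp ϑ 2 P := by
    have := hξ.sub (MemLp.of_bound (hξm.sub hϑm).aestronglyMeasurable ε (ae_of_all _ hξϑ))
    rwa [sub_sub_cancel] at this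
  have hatom : P.map ϑ {y} ≠ 0 := by
    rw [Measure.map_apply hϑm (measurableSet_singleton y)]
    refine (hPE.trans_le (measure_mono fun ω hω => ?_)).ne'
    simp [ϑ, hω]
  have hW2 : W2 (P.map ξ) (P.map ϑ) ≤ ε := W2_map_le_of_abs_sub_le P hξm hϑm hε.le hξϑ
  have hmove : ∀ D : Measure ℝ → ℝ,
      (|D (P.map ξ) - D (P.map ϑ)| ≤ C * (|x - x| + |y - y| + W2 (P.map ξ) (P.map ϑ))) →
      |D (P.map ξ) - D (P.map ϑ)| ≤ C * ε := fun D hD => by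
    simpa using hD.trans (by simpa using mul_le_mul_of_nonneg_left hW2 hC)
  calc |DxDμg x (P.map ξ) y - DμDxg x (P.map ξ) y|
      = |(DxDμg x (P.map ξ) y - DxDμg x (P.map ϑ) y)
          - (DμDxg x (P.map ξ) y - DμDxg x (P.map ϑ) y)| := by
        rw [mixed_derivs_eq_of_atom P hDxg hDμg hDxDμ hDμDx hC hlip hϑm hϑ x hatom]; ring_nf
    _ ≤ C * ε + C * ε := (abs_sub _ _).trans (add_le_add
        (hmove (DxDμg x · y) (hlip _ _ _ _ _ _).1) (hmove (DμDxg x · y) (hlip _ _ _ _ _ _).2))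
    _ = 2 * C * ε := by ring

theorem statement12_general (P : Measure Ω) [IsProbabilityMeasure P]
    (g : ℝ → Measure ℝ → ℝ)
    (Dxg : ℝ → Measure ℝ → ℝ) (Dμg : ℝ → Measure ℝ → ℝ → ℝ)
    (DxDμg DμDxg : ℝ → Measure ℝ → ℝ → ℝ) (C : ℝ)
    (hDxg : ∀ x μ, HasDerivAt (fun x' => g x' μ) (Dxg x μ) x)
    (hDμg : ∀ x, LionsDeriv1 P (g x) (Dμg x))
    (hDxDμ : ∀ μ y x, HasDerivAt (fun x' => Dμg x' μ y) (DxDμg x μ y) x)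
    (hDμDx : ∀ x, LionsDeriv1 P (fun μ => Dxg x μ) (fun μ y => DμDxg x μ y))
    (hlip : ∀ x x' μ μ' y y',
      |DxDμg x μ y - DxDμg x' μ' y'| ≤ C * (|x - x'| + |y - y'| + W2 μ μ') ∧
      |DμDxg x μ y - DμDxg x' μ' y'| ≤ C * (|x - x'| + |y - y'| + W2 μ μ')) :
    ∀ ξ : Ω → ℝ, Measurable ξ → MemLp ξ 2 P → ∀ x : ℝ,
      (∀ (z : ℝ) (η : Ω → ℝ), Measurable η → MemLp η 2 P →
        ∃ R : ℝ,
          (∫ ω, DxDμg x (P.map ξ) (ξ ω) * η ω ∂P) * z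
            = (∫ ω, DμDxg x (P.map ξ) (ξ ω) * η ω ∂P) * z + R
          ∧ |R| ≤ 4 * C * |z| ^ 2 * ∫ ω, (η ω) ^ 2 ∂P)
      ∧ (∀ᵐ y ∂(P.map ξ), DxDμg x (P.map ξ) y = DμDxg x (P.map ξ) y) := by
  intro ξ hξm hξ x
  have hC : 0 ≤ C := by
    have h := (hlip 1 0 0 0 0 0).1
    norm_num at h
    nlinarith [abs_nonneg (DxDμg 1 0 0 - DxDμg 0 0 0), W2_nonneg 0 0]
  have hae : ∀ᵐ y ∂(P.map ξ), DxDμg x (P.map ξ) y = DμDxg x (P.map ξ) y := by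
    filter_upwards [Measure.support_mem_ae (μ := P.map ξ)] with y hy
    exact mixed_derivs_eq_of_mem_support P hDxg hDμg hDxDμ hDμDx hC hlip hξm hξ x hy
  refine ⟨fun z η _ _ => ⟨0, ?_, ?_⟩, hae⟩
  · rw [add_zero, integral_congr_ae ((ae_of_ae_map hξm.aemeasurable hae).mono fun ω h => by rw [h])]
  · rw [abs_zero]
    exact mul_nonneg (mul_nonneg (mul_nonneg zero_le_four hC) (sq_nonneg _))
      (integral_nonneg fun _ => sq_nonneg _)

/-- Clairaut identity, a.e. step.  Computing the double increment
`I = g(x+z,P_{ξ+η}) − g(x+z,P_ξ) − g(x,P_{ξ+η}) + g(x,P_ξ)` in two ways yields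
`E[∂_x(∂_μ g)(x,P_ξ,ξ)η]·z = E[∂_μ(∂_x g)(x,P_ξ)(ξ)η]·z + R` with
`|R| ≤ 4C|z|²E[η²]`; consequently the two mixed derivatives agree `P_ξ`-a.e. -/
theorem statement12 (P : Measure Ω) [IsProbabilityMeasure P]
    (g : ℝ → Measure ℝ → ℝ)
    (Dxg : ℝ → Measure ℝ → ℝ) (Dμg : ℝ → Measure ℝ → ℝ → ℝ)
    (DxDμg DμDxg : ℝ → Measure ℝ → ℝ → ℝ) (C : ℝ)
    (hDxg : ∀ x μ, HasDerivAt (fun x' => g x' μ) (Dxg x μ) x)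
    (hDμg : ∀ x, LionsDeriv1 P (g x) (Dμg x))
    (hDxDμ : ∀ μ y x, HasDerivAt (fun x' => Dμg x' μ y) (DxDμg x μ y) x)
    (hDμDx : ∀ x, LionsDeriv1 P (fun μ => Dxg x μ) (fun μ y => DμDxg x μ y))
    (hbound : ∀ x μ y, |DxDμg x μ y| ≤ C ∧ |DμDxg x μ y| ≤ C)
    (hlip : ∀ x x' μ μ' y y',
      |DxDμg x μ y - DxDμg x' μ' y'| ≤ C * (|x - x'| + |y - y'| + W2 μ μ') ∧
      |DμDxg x μ y - DμDxg x' μ' y'| ≤ C * (|x - x'| + |y - y'| + W2 μ μ')) :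
    ∀ ξ : Ω → ℝ, Measurable ξ → MemLp ξ 2 P → ∀ x : ℝ,
      (∀ (z : ℝ) (η : Ω → ℝ), Measurable η → MemLp η 2 P →
        ∃ R : ℝ,
          (∫ ω, DxDμg x (P.map ξ) (ξ ω) * η ω ∂P) * z
            = (∫ ω, DμDxg x (P.map ξ) (ξ ω) * η ω ∂P) * z + R
          ∧ |R| ≤ 4 * C * |z| ^ 2 * ∫ ω, (η ω) ^ 2 ∂P)
      ∧ (∀ᵐ y ∂(P.map ξ), DxDμg x (P.map ξ) y = DμDxg x (P.map ξ) y) :=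
  statement12_general P g Dxg Dμg DxDμg DμDxg C hDxg hDμg hDxDμ hDμDx hlip
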